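/- arXiv:1206.5343 — 3 statements merged into one kernel-verified Lean document; each statement's English description precedes it below -/
import Mathlib

section
/- For the weighted Kendall distance with weights w_i = φ(i,i+1) ≥ 0, the distance between any two permutations π and σ satisfies d_φ(π,σ) ≥ (1/2) ∑_{i=1}^n W(π⁻¹(i), σ⁻¹(i)), where W(a,b) = ∑_{l=min(a,b)}^{max(a,b)-1} w_l. -/
/-!
Measure the distance between two rankings by the footrule `∑ i, W(π⁻¹ i, σ⁻¹ i)`. It is
left-invariant and satisfies the triangle inequality, and an adjacent transposition of
positions `i, i+1` has footrule exactly `2 wᵢ` (only two items move, each by the single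
edge `i`). Hence along any sequence of adjacent transpositions from `σ` to `π` the footrule
grows by at most twice the weight spent.
-/

open Equiv Finset

/-- The weighted Kendall distance: minimum total weight of a sequence of adjacent
transpositions transforming `σ` into `π`, where the adjacent transposition of positions
`i` and `i+1` (zero-indexed) has weight `w i`. -/
noncomputable def wk {n : ℕ} (w : ℕ → ℝ) (π σ : Equiv.Perm (Fin n)) : ℝ :=
  sInf {c | ∃ L : List (Fin n), (∀ i ∈ L, (i : ℕ) + 1 < n) ∧
    σ * (L.map fun i => Equiv.swap i ⟨((i : ℕ) + 1) % n, Nat.mod_lt _ i.pos⟩).prod = π ∧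
    c = (L.map fun i => w (i : ℕ)).sum}

/-- `W a b = ∑_{l=min(a,b)}^{max(a,b)-1} w_l`, the path weight between positions `a` and `b`. -/
def pathW (w : ℕ → ℝ) (a b : ℕ) : ℝ := ∑ l ∈ Finset.Ico (min a b) (max a b), w l

section PathWeight

variable (w : ℕ → ℝ)

@[simp]
lemma pathW_self (a : ℕ) : pathW w a a = 0 := by simp [pathW]

lemma pathW_comm (a b : ℕ) : pathW w a b = pathW w b a := by
  rw [pathW, pathW, min_comm, max_comm]

@[simp]
lemma pathW_succ_right (a : ℕ) : pathW w a (a + 1) = w a := by simp [pathW]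

@[simp]
lemma pathW_succ_left (a : ℕ) : pathW w (a + 1) a = w a := by
  rw [pathW_comm, pathW_succ_right]

variable {w}

lemma pathW_triangle (hw : ∀ l, 0 ≤ w l) (a b c : ℕ) :
    pathW w a c ≤ pathW w a b + pathW w b c := by
  let I := Ico (min a b) (max a b)
  let J := Ico (min b c) (max b c)
  have hsub : Ico (min a c) (max a c) ⊆ I ∪ J := by
    intro l
    simp only [I, J, mem_Ico, mem_union]
    omega
  calc pathW w a c ≤ ∑ l ∈ I ∪ J, w l :=
        sum_le_sum_of_subset_of_nonneg hsub fun l _ _ => hw l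
    _ ≤ ∑ l ∈ I ∪ J, w l + ∑ l ∈ I ∩ J, w l :=
        le_add_of_nonneg_right (sum_nonneg fun l _ => hw l)
    _ = pathW w a b + pathW w b c := sum_union_inter

end PathWeight

section Footrule

variable {n : ℕ} (w : ℕ → ℝ)

def footrule (π σ : Perm (Fin n)) : ℝ := ∑ i, pathW w (π⁻¹ i : ℕ) (σ⁻¹ i : ℕ)

lemma footrule_mul_left (ρ π σ : Perm (Fin n)) :
    footrule w (ρ * π) (ρ * σ) = footrule w π σ := by
  simp only [footrule, mul_inv_rev, Perm.mul_apply]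
  exact Equiv.sum_comp ρ⁻¹ fun j => pathW w (π⁻¹ j : ℕ) (σ⁻¹ j : ℕ)

lemma footrule_triangle {w} (hw : ∀ l, 0 ≤ w l) (π ρ σ : Perm (Fin n)) :
    footrule w π σ ≤ footrule w π ρ + footrule w ρ σ := by
  rw [footrule, footrule, footrule, ← sum_add_distrib]
  exact sum_le_sum fun i _ => pathW_triangle hw _ _ _

/-- Spelled exactly as in `wk`, so that `wk`'s defining set can be stated with it. -/
def adjSwap (i : Fin n) : Perm (Fin n) := swap i ⟨((i : ℕ) + 1) % n, Nat.mod_lt _ i.pos⟩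

lemma adjSwap_castSucc {m : ℕ} (i : Fin m) : adjSwap i.castSucc = swap i.castSucc i.succ := by
  rw [adjSwap]
  congr
  simp [Nat.mod_eq_of_lt (Nat.succ_lt_succ i.is_lt)]

lemma footrule_adjSwap_one {i : Fin n} (hi : (i : ℕ) + 1 < n) :
    footrule w (adjSwap i) 1 = 2 * w i := by
  let j : Fin n := ⟨(i : ℕ) + 1, hi⟩
  have hs : adjSwap i = swap i j := by
    rw [adjSwap]
    congr
    exact Nat.mod_eq_of_lt hi
  have hij : i ≠ j := Fin.ne_of_val_ne (Nat.ne_of_lt (Nat.lt_succ_self _))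
  rw [footrule, hs, swap_inv, sum_eq_add_of_mem i j (mem_univ _) (mem_univ _) hij]
  · simp [j, two_mul]
  · intro k _ hk
    simp [swap_apply_of_ne_of_ne hk.1 hk.2]

lemma footrule_prod_adjSwap_le {w} (hw : ∀ l, 0 ≤ w l) (L : List (Fin n))
    (hL : ∀ i ∈ L, (i : ℕ) + 1 < n) :
    footrule w (L.map adjSwap).prod 1 ≤ 2 * (L.map fun i : Fin n => w i).sum := by
  induction L with
  | nil => simp [footrule]
  | cons a L ih =>
    have ih := ih fun i hi => hL i (List.mem_cons_of_mem _ hi)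
    have hstep : footrule w (adjSwap a * (L.map adjSwap).prod) (adjSwap a) =
        footrule w (L.map adjSwap).prod 1 := by
      simpa using footrule_mul_left w (adjSwap a) (L.map adjSwap).prod 1
    have hswap := footrule_adjSwap_one w (hL a List.mem_cons_self)
    have := footrule_triangle hw (adjSwap a * (L.map adjSwap).prod) (adjSwap a) 1
    simp only [List.map_cons, List.prod_cons, List.sum_cons] at this ⊢
    linarith

end Footrule

lemma exists_list_prod_adjSwap_eq {n : ℕ} (τ : Perm (Fin n)) :
    ∃ L : List (Fin n), (∀ i ∈ L, (i : ℕ) + 1 < n) ∧ (L.map adjSwap).prod = τ := by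
  cases n with
  | zero => exact ⟨[], by simp, Subsingleton.elim _ _⟩
  | succ m =>
    have hτ : τ ∈ Submonoid.closure (Set.range fun i : Fin m ↦ swap i.castSucc i.succ) := by
      rw [Perm.mclosure_swap_castSucc_succ m]
      trivial
    induction hτ using Submonoid.closure_induction with
    | mem x hx =>
      obtain ⟨i, rfl⟩ := hx
      exact ⟨[i.castSucc], by simp, by simp [adjSwap_castSucc]⟩
    | one => exact ⟨[], by simp, rfl⟩
    | mul x y _ _ ihx ihy =>
      obtain ⟨L₁, hL₁, rfl⟩ := ihx
      obtain ⟨L₂, hL₂, rfl⟩ := ihy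
      refine ⟨L₁ ++ L₂, ?_, by rw [List.map_append, List.prod_append]⟩
      simpa only [List.mem_append, or_imp, forall_and] using ⟨hL₁, hL₂⟩

/-- lower bound for the weighted Kendall distance by half the
generalized Spearman footrule. -/
theorem stmt_7 {n : ℕ} (w : ℕ → ℝ) (hw : ∀ l, 0 ≤ w l) (π σ : Equiv.Perm (Fin n)) :
    (1 / 2) * ∑ i : Fin n, pathW w ((π⁻¹ i : Fin n) : ℕ) ((σ⁻¹ i : Fin n) : ℕ) ≤ wk w π σ := by
  -- `wk` charges `L` through the coercion `List (Fin n) → List ℕ`, a monadic bind.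
  have hcost (L : List (Fin n)) :
      (L.map fun i => w (i : ℕ)).sum = (L.map fun i : Fin n => w i).sum := by
    induction L <;> simp_all
  have hne : {c | ∃ L : List (Fin n), (∀ i ∈ L, (i : ℕ) + 1 < n) ∧
      σ * (L.map adjSwap).prod = π ∧ c = (L.map fun i => w (i : ℕ)).sum}.Nonempty := by
    obtain ⟨L, hL, hprod⟩ := exists_list_prod_adjSwap_eq (σ⁻¹ * π)
    exact ⟨_, L, hL, by rw [hprod, mul_inv_cancel_left], rfl⟩
  apply le_csInf hne
  rintro c ⟨L, hL, rfl, rfl⟩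
  have hbound := footrule_prod_adjSwap_le hw L hL
  rw [← footrule_mul_left w σ, mul_one] at hbound
  change (1 / 2) * footrule w _ σ ≤ _
  rw [hcost]
  linarith
end

section
/- The shortest-path distance η(a,b) in the complete graph on [n] with nonnegative symmetric edge weights φ satisfies: d_φ((a b), e) ≤ 2 η(a,b) − φ(a',b') for some edge (a',b') on a shortest path, and in particular the weighted transposition distance of a single transposition satisfies d_φ((a b), e) ≤ 2 η(a,b). -/
/-- The weighted transposition distance: minimum total weight of a sequence of
transpositions transforming `σ` into `π`, with weight `φ a b` for the transposition `(a b)`. -/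
noncomputable def wtd {n : ℕ} (φ : Fin n → Fin n → ℝ) (π σ : Equiv.Perm (Fin n)) : ℝ :=
  sInf {c | ∃ L : List (Fin n × Fin n), (∀ p ∈ L, p.1 ≠ p.2) ∧
    σ * (L.map fun p => Equiv.swap p.1 p.2).prod = π ∧
    c = (L.map fun p => φ p.1 p.2).sum}


/-- Shortest-path distance between `a` and `b` in the complete graph on `[n]`
with edge weights `φ` (zero if `a = b`, via the empty path). -/
noncomputable def eta {n : ℕ} (φ : Fin n → Fin n → ℝ) (a b : Fin n) : ℝ :=
  sInf {c | ∃ L : List (Fin n), (a :: L).getLast (by simp) = b ∧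
    c = (((a :: L).zip L).map fun p => φ p.1 p.2).sum}

namespace WeightedTransposition

section Path

variable {α : Type*} (φ : α → α → ℝ)

/-- `pathCost φ (a :: L)` is definitionally the cost of the path `a :: L` in `eta`. -/
noncomputable def pathCost (l : List α) : ℝ :=
  ((l.zip l.tail).map fun p => φ p.1 p.2).sum

@[simp] lemma pathCost_nil : pathCost φ [] = 0 := rfl

@[simp] lemma pathCost_singleton (x : α) : pathCost φ [x] = 0 := rfl

@[simp] lemma pathCost_cons_cons (x y : α) (l : List α) :
    pathCost φ (x :: y :: l) = φ x y + pathCost φ (y :: l) := by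
  simp [pathCost]

variable {φ}

lemma pathCost_le_cons (hφ : ∀ x y, 0 ≤ φ x y) (x : α) (l : List α) :
    pathCost φ l ≤ pathCost φ (x :: l) := by
  cases l with
  | nil => simp
  | cons y l => simpa using hφ x y

lemma pathCost_le_append (hφ : ∀ x y, 0 ≤ φ x y) (P M : List α) :
    pathCost φ M ≤ pathCost φ (P ++ M) := by
  induction P with
  | nil => exact le_rfl
  | cons x P ih => exact ih.trans (pathCost_le_cons hφ x _)

/-- A walk that revisits its start `a` is cut at the last visit of `a`, which only drops edges. -/
lemma exists_nodup_path_le (hφ : ∀ x y, 0 ≤ φ x y) (b : α) :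
    ∀ (L : List α) (a : α), (a :: L).getLast (by simp) = b →
      ∃ L' : List α, (a :: L').getLast (by simp) = b ∧ (a :: L').Nodup ∧
        pathCost φ (a :: L') ≤ pathCost φ (a :: L)
  | [], a, h => ⟨[], h, List.nodup_singleton a, le_rfl⟩
  | v :: L, a, h => by
    obtain ⟨L', hlast, hnodup, hcost⟩ :=
      exists_nodup_path_le hφ b L v (by rwa [List.getLast_cons (List.cons_ne_nil _ _)] at h)
    by_cases ha : a ∈ v :: L'
    · obtain ⟨P, Q, hsplit⟩ := List.append_of_mem ha
      refine ⟨Q, ?_, ?_, ?_⟩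
      · rw [← hlast, List.getLast_congr _ (by simp) hsplit, List.getLast_append_of_right_ne_nil]
      · exact hnodup.sublist (hsplit ▸ List.sublist_append_right P (a :: Q))
      · calc pathCost φ (a :: Q) ≤ pathCost φ (v :: L') := hsplit ▸ pathCost_le_append hφ P _
          _ ≤ pathCost φ (v :: L) := hcost
          _ ≤ pathCost φ (a :: v :: L) := pathCost_le_cons hφ a _
    · refine ⟨v :: L', ?_, List.nodup_cons.mpr ⟨ha, hnodup⟩, ?_⟩
      · rwa [List.getLast_cons (List.cons_ne_nil _ _)]
      · simpa using hcost

/-- Conjugating along the path: `(a b) = (a v) (v b) (a v)` with `(v b)` realized recursively,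
so every edge is paid twice except the last one. -/
lemma exists_swaps_along_nodup_path [DecidableEq α] :
    ∀ (L : List α) (a : α), (a :: L).Nodup → L ≠ [] →
      ∃ (T : List (α × α)) (p : α × α), p ∈ (a :: L).zip L ∧
        (∀ q ∈ T, q.1 ≠ q.2) ∧
        (T.map fun q => Equiv.swap q.1 q.2).prod = Equiv.swap a ((a :: L).getLast (by simp)) ∧
        (T.map fun q => φ q.1 q.2).sum = 2 * pathCost φ (a :: L) - φ p.1 p.2
  | [], _, _, hne => absurd rfl hne
  | [v], a, hnodup, _ => by
    have hav : a ≠ v := by simpa using hnodup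
    exact ⟨[(a, v)], (a, v), by simp, by simpa using hav, by simp, by simp; ring⟩
  | v :: w :: L, a, hnodup, _ => by
    obtain ⟨ha, hnodup'⟩ := List.nodup_cons.mp hnodup
    obtain ⟨T, p, hp, hT, hprod, hsum⟩ :=
      exists_swaps_along_nodup_path (w :: L) v hnodup' (List.cons_ne_nil _ _)
    set b := (v :: w :: L).getLast (by simp)
    have hb : b ∈ w :: L := by
      simp only [b, List.getLast_cons (List.cons_ne_nil _ _)]; exact List.getLast_mem _
    have hav : a ≠ v := fun h => ha (h ▸ List.mem_cons_self)
    have hab : a ≠ b := fun h => ha (h ▸ List.mem_cons_of_mem v hb)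
    have hvb : v ≠ b := fun h => (List.nodup_cons.mp hnodup').1 (h ▸ hb)
    refine ⟨(a, v) :: T ++ [(a, v)], p, List.mem_cons_of_mem _ hp, ?_, ?_, ?_⟩
    · simp only [List.cons_append, List.mem_cons, List.mem_append, List.not_mem_nil, or_false]
      rintro q (rfl | hq | rfl)
      exacts [hav, hT q hq, hav]
    · rw [List.getLast_cons (List.cons_ne_nil _ _)]
      simp only [List.map_cons, List.map_append, List.prod_cons, List.prod_append, List.map_nil,
        List.prod_nil, mul_one, hprod]
      rw [Equiv.swap_comm a v, Equiv.swap_comm v b]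
      exact Equiv.swap_mul_swap_mul_swap hvb.symm hab.symm
    · simp only [List.map_cons, List.map_append, List.sum_cons, List.sum_append, List.map_nil,
        List.sum_nil, pathCost_cons_cons, hsum]
      ring

end Path

variable {n : ℕ} {φ : Fin n → Fin n → ℝ}

/-- Only nodup paths matter, and there are finitely many of them, so the infimum is attained. -/
lemma exists_nodup_path_eq_eta (hφ : ∀ x y, 0 ≤ φ x y) (a b : Fin n) :
    ∃ L : List (Fin n), (a :: L).getLast (by simp) = b ∧ (a :: L).Nodup ∧
      pathCost φ (a :: L) = eta φ a b := by
  set N := {L : List (Fin n) | (a :: L).getLast (by simp) = b ∧ (a :: L).Nodup}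
  have hN : N.Finite := (List.finite_length_le (Fin n) n).subset fun L hL =>
    (by simpa using hL.2.length_le_card : L.length < n).le
  obtain ⟨L₀, hL₀⟩ := exists_nodup_path_le hφ b [b] a (by simp)
  obtain ⟨L, hL, hmin⟩ :=
    Set.exists_min_image N (fun L => pathCost φ (a :: L)) hN ⟨L₀, hL₀.1, hL₀.2.1⟩
  refine ⟨L, hL.1, hL.2, Eq.symm (IsLeast.csInf_eq ⟨⟨L, hL.1, rfl⟩, ?_⟩)⟩
  rintro _ ⟨L', hL', rfl⟩
  obtain ⟨L'', hlast, hnodup, hle⟩ := exists_nodup_path_le hφ b L' a hL'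
  exact (hmin L'' ⟨hlast, hnodup⟩).trans hle

lemma wtd_le_of_prod_eq (hφ : ∀ x y, 0 ≤ φ x y) {π σ : Equiv.Perm (Fin n)}
    (T : List (Fin n × Fin n)) (hT : ∀ q ∈ T, q.1 ≠ q.2)
    (hprod : σ * (T.map fun q => Equiv.swap q.1 q.2).prod = π) :
    wtd φ π σ ≤ (T.map fun q => φ q.1 q.2).sum := by
  refine csInf_le ⟨0, ?_⟩ ⟨T, hT, hprod, rfl⟩
  rintro _ ⟨T', -, -, rfl⟩
  exact List.sum_nonneg (by simp only [List.mem_map]; rintro _ ⟨q, -, rfl⟩; exact hφ _ _)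

end WeightedTransposition

open WeightedTransposition in
/-- the weighted transposition distance of a single transposition `(a b)`
from the identity is at most `2 η(a,b) − φ(a',b')` for some edge `(a',b')` on a shortest
path from `a` to `b`; in particular it is at most `2 η(a,b)`. -/
theorem stmt_15 {n : ℕ} (φ : Fin n → Fin n → ℝ) (hφ : ∀ x y, 0 ≤ φ x y)
    (a b : Fin n) (hab : a ≠ b) :
    (∃ L : List (Fin n), (a :: L).getLast (by simp) = b ∧
      (((a :: L).zip L).map fun p => φ p.1 p.2).sum = eta φ a b ∧
      ∃ p ∈ (a :: L).zip L,
        wtd φ (Equiv.swap a b) 1 ≤ 2 * eta φ a b - φ p.1 p.2) ∧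
    wtd φ (Equiv.swap a b) 1 ≤ 2 * eta φ a b := by
  obtain ⟨L, hlast, hnodup, hcost⟩ := exists_nodup_path_eq_eta hφ a b
  have hL : L ≠ [] := by rintro rfl; exact hab hlast
  obtain ⟨T, p, hp, hT, hprod, hsum⟩ := exists_swaps_along_nodup_path L a hnodup hL
  have hwtd : wtd φ (Equiv.swap a b) 1 ≤ 2 * eta φ a b - φ p.1 p.2 := by
    rw [← hcost, ← hsum]
    exact wtd_le_of_prod_eq hφ T hT (by rw [one_mul, hprod, hlast])
  exact ⟨⟨L, hlast, hcost, p, hp, hwtd⟩, hwtd.trans (by linarith [hφ p.1 p.2])⟩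
end

section
/- With weight function w = [1,1,0,0] on adjacent transpositions of S₅ (weighted Kendall distance), and the 11 votes given by the columns of the matrix [[1,1,1,2,2,3,3,4,4,5,5],[2,2,2,3,3,2,2,2,2,2,2],[3,3,3,4,4,4,4,5,5,3,3],[4,4,4,5,5,5,5,3,3,4,4],[5,5,5,1,1,1,1,1,1,1,1]], the permutation [2,3,4,5,1] achieves cumulative weighted Kendall distance 16 from the votes (average 16/11 ≈ 1.455), and no permutation achieves a smaller cumulative distance. -/
/-- Build a permutation of `Fin 5` from its one-line notation (zero-indexed). -/
noncomputable def mkPerm (v : Fin 5 → Fin 5) (h : Function.Bijective v) : Equiv.Perm (Fin 5) :=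
  Equiv.ofBijective v h

/-- Vote `[1,2,3,4,5]` (columns 1–3). -/
noncomputable def v1 : Equiv.Perm (Fin 5) := mkPerm ![0, 1, 2, 3, 4] (by decide)
/-- Vote `[2,3,4,5,1]` (columns 4–5). -/
noncomputable def v2 : Equiv.Perm (Fin 5) := mkPerm ![1, 2, 3, 4, 0] (by decide)
/-- Vote `[3,2,4,5,1]` (columns 6–7). -/
noncomputable def v3 : Equiv.Perm (Fin 5) := mkPerm ![2, 1, 3, 4, 0] (by decide)
/-- Vote `[4,2,5,3,1]` (columns 8–9). -/
noncomputable def v4 : Equiv.Perm (Fin 5) := mkPerm ![3, 1, 4, 2, 0] (by decide)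
/-- Vote `[5,2,3,4,1]` (columns 10–11). -/
noncomputable def v5 : Equiv.Perm (Fin 5) := mkPerm ![4, 1, 2, 3, 0] (by decide)

/-- The 11 votes (columns of the matrix). -/
noncomputable def votes : Fin 11 → Equiv.Perm (Fin 5) :=
  ![v1, v1, v1, v2, v2, v3, v3, v4, v4, v5, v5]

/-- The weights `w = [1,1,0,0]` on adjacent transpositions (zero-indexed). -/
noncomputable def w2 : ℕ → ℝ := fun l => if l ≤ 1 then 1 else 0

/-!
Every word in the adjacent transpositions costs at least the increase it causes in any potential
that grows by at most `w i` under right multiplication by the `i`-th adjacent swap, so such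
potentials bound `wk` from below, while explicit words bound it from above. For the weights
`[1, 1, 0, 0]` the swaps among positions `2, 3, 4` are free, and the exact distance from `1` to `g`
is a function `frontCost (g 0) (g 1)` of the two front entries alone. Summing these lower bounds
over the votes reduces the minimality claim to a finite check over the pair `(π 0, π 1)`.
-/

open Equiv

namespace WeightedKendall

section General

variable {n : ℕ}

def adjSwap (i : Fin n) : Perm (Fin n) :=
  swap i ⟨((i : ℕ) + 1) % n, Nat.mod_lt _ i.pos⟩

def wordCost (w : ℕ → ℝ) (L : List (Fin n)) : ℝ :=
  (L.map fun i : Fin n => w i).sum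

theorem wk_eq_sInf (w : ℕ → ℝ) (π σ : Perm (Fin n)) :
    wk w π σ = sInf {c | ∃ L : List (Fin n), (∀ i ∈ L, (i : ℕ) + 1 < n) ∧
      σ * (L.map adjSwap).prod = π ∧ c = wordCost w L} := by
  simp only [wk, List.pure_def, List.bind_eq_flatMap, ← List.map_eq_flatMap, List.map_map]
  rfl

theorem exists_adjSwap_word (g : Perm (Fin n)) :
    ∃ L : List (Fin n), (∀ i ∈ L, (i : ℕ) + 1 < n) ∧ (L.map adjSwap).prod = g := by
  cases n with
  | zero => exact ⟨[], by simp, Subsingleton.elim _ _⟩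
  | succ m =>
    have hg : g ∈ Submonoid.closure (Set.range fun i : Fin m ↦ swap i.castSucc i.succ) := by
      rw [Perm.mclosure_swap_castSucc_succ]; trivial
    induction hg using Submonoid.closure_induction with
    | mem _ hx =>
      obtain ⟨i, rfl⟩ := hx
      refine ⟨[i.castSucc], by simp, ?_⟩
      rw [List.map_singleton, List.prod_singleton, adjSwap]
      congr 1
      exact Fin.ext (Nat.mod_eq_of_lt (Nat.succ_lt_succ i.isLt))
    | one => exact ⟨[], by simp, rfl⟩
    | mul x y _ _ hx hy =>
      obtain ⟨L, hL, rfl⟩ := hx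
      obtain ⟨M, hM, rfl⟩ := hy
      exact ⟨L ++ M, fun i hi => (List.mem_append.1 hi).elim (hL i) (hM i), by simp⟩

theorem wk_le_wordCost {w : ℕ → ℝ} (hw : ∀ k, 0 ≤ w k) {π σ : Perm (Fin n)} {L : List (Fin n)}
    (hL : ∀ i ∈ L, (i : ℕ) + 1 < n) (h : σ * (L.map adjSwap).prod = π) :
    wk w π σ ≤ wordCost w L := by
  rw [wk_eq_sInf]
  refine csInf_le ⟨0, ?_⟩ ⟨L, hL, h, rfl⟩
  rintro _ ⟨M, -, -, rfl⟩
  exact List.sum_nonneg (by simp [hw])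

theorem potential_mul_prod_le {w : ℕ → ℝ} {P : Perm (Fin n) → ℝ}
    (hP : ∀ g (i : Fin n), (i : ℕ) + 1 < n → P (g * adjSwap i) ≤ P g + w i)
    (g : Perm (Fin n)) {L : List (Fin n)} (hL : ∀ i ∈ L, (i : ℕ) + 1 < n) :
    P (g * (L.map adjSwap).prod) ≤ P g + wordCost w L := by
  induction L generalizing g with
  | nil => simp [wordCost]
  | cons i L ih =>
    have hi := hP g i (hL i (by simp))
    have hrest := ih (g * adjSwap i) fun j hj => hL j (by simp [hj])
    calc P (g * ((i :: L).map adjSwap).prod)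
        = P (g * adjSwap i * (L.map adjSwap).prod) := by
          rw [List.map_cons, List.prod_cons, mul_assoc]
      _ ≤ P g + w i + wordCost w L := by linarith
      _ = P g + wordCost w (i :: L) := by
          rw [wordCost, wordCost, List.map_cons, List.sum_cons, add_assoc]

theorem potential_sub_le_wk {w : ℕ → ℝ} {P : Perm (Fin n) → ℝ}
    (hP : ∀ g (i : Fin n), (i : ℕ) + 1 < n → P (g * adjSwap i) ≤ P g + w i)
    (π σ : Perm (Fin n)) :
    P (σ⁻¹ * π) - P 1 ≤ wk w π σ := by
  obtain ⟨L₀, hL₀, h₀⟩ := exists_adjSwap_word (σ⁻¹ * π)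
  rw [wk_eq_sInf]
  refine le_csInf ⟨_, L₀, hL₀, by rw [h₀, mul_inv_cancel_left], rfl⟩ ?_
  rintro _ ⟨L, hL, h, rfl⟩
  have hprod : (L.map adjSwap).prod = σ⁻¹ * π := by rw [← h, inv_mul_cancel_left]
  have := potential_mul_prod_le hP 1 hL
  rw [one_mul, hprod] at this
  linarith

end General

/-- Bringing `a` to the front crosses the two costly boundaries `min a 2` times; then `b` costs one
more swap unless it is already the smallest remaining entry. -/
def frontCost (a b : Fin 5) : ℕ :=
  min (a : ℕ) 2 + if b = (if a = 0 then 1 else 0) then 0 else 1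

theorem w2_nonneg (k : ℕ) : 0 ≤ w2 k := by
  unfold w2; split <;> norm_num

theorem frontCost_mul_adjSwap_le (g : Perm (Fin 5)) (i : Fin 5) (hi : (i : ℕ) + 1 < 5) :
    (frontCost ((g * adjSwap i) 0) ((g * adjSwap i) 1) : ℝ) ≤ frontCost (g 0) (g 1) + w2 i := by
  have key : ∀ a b c : Fin 5, a ≠ b → a ≠ c → b ≠ c →
      frontCost b a ≤ frontCost a b + 1 ∧ frontCost a c ≤ frontCost a b + 1 := by decide
  obtain ⟨hswap, hreplace⟩ := key (g 0) (g 1) (g 2) (g.injective.ne (by decide))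
    (g.injective.ne (by decide)) (g.injective.ne (by decide))
  fin_cases i
  · change (frontCost (g 1) (g 0) : ℝ) ≤ frontCost (g 0) (g 1) + w2 0
    norm_num [w2]; exact_mod_cast hswap
  · change (frontCost (g 0) (g 2) : ℝ) ≤ frontCost (g 0) (g 1) + w2 1
    norm_num [w2]; exact_mod_cast hreplace
  · change (frontCost (g 0) (g 1) : ℝ) ≤ frontCost (g 0) (g 1) + w2 2
    norm_num [w2]
  · change (frontCost (g 0) (g 1) : ℝ) ≤ frontCost (g 0) (g 1) + w2 3
    norm_num [w2]
  · exact absurd hi (by decide)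

theorem frontCost_le_wk {π σ : Perm (Fin 5)} {t : Fin 5 → Fin 5} (ht : ∀ x, σ (t x) = x) :
    (frontCost (t (π 0)) (t (π 1)) : ℝ) ≤ wk w2 π σ := by
  have hinv : ∀ x, σ⁻¹ x = t x := fun x => by rw [Perm.inv_eq_iff_eq, ht]
  have := potential_sub_le_wk (P := fun g => (frontCost (g 0) (g 1) : ℝ))
    frontCost_mul_adjSwap_le π σ
  have h1 : frontCost 0 1 = 0 := rfl
  simpa only [Perm.mul_apply, Perm.one_apply, hinv, h1, Nat.cast_zero, sub_zero] using this

theorem sum_votes (f : Perm (Fin 5) → ℝ) :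
    ∑ i : Fin 11, f (votes i) = 3 * f v1 + 2 * f v2 + 2 * f v3 + 2 * f v4 + 2 * f v5 := by
  simp only [Fin.sum_univ_succ, Fin.sum_univ_zero, votes, Matrix.cons_val_zero,
    Matrix.cons_val_succ]
  ring

/-- The four tables are `v2⁻¹, …, v5⁻¹` in one-line notation; `v1 = 1`. -/
theorem sixteen_le_votes_frontCost : ∀ a b : Fin 5, a ≠ b →
    16 ≤ 3 * frontCost a b + 2 * frontCost (![4, 0, 1, 2, 3] a) (![4, 0, 1, 2, 3] b) +
      2 * frontCost (![4, 1, 0, 2, 3] a) (![4, 1, 0, 2, 3] b) +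
      2 * frontCost (![4, 1, 3, 0, 2] a) (![4, 1, 3, 0, 2] b) +
      2 * frontCost (![4, 1, 2, 3, 0] a) (![4, 1, 2, 3, 0] b) := by
  decide

theorem sixteen_le_sum_wk (π : Perm (Fin 5)) : 16 ≤ ∑ i : Fin 11, wk w2 π (votes i) := by
  have h1 := frontCost_le_wk (π := π) (σ := v1) (t := fun x => x) (by decide)
  have h2 := frontCost_le_wk (π := π) (σ := v2) (t := ![4, 0, 1, 2, 3]) (by decide)
  have h3 := frontCost_le_wk (π := π) (σ := v3) (t := ![4, 1, 0, 2, 3]) (by decide)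
  have h4 := frontCost_le_wk (π := π) (σ := v4) (t := ![4, 1, 3, 0, 2]) (by decide)
  have h5 := frontCost_le_wk (π := π) (σ := v5) (t := ![4, 1, 2, 3, 0]) (by decide)
  have key := sixteen_le_votes_frontCost (π 0) (π 1) (π.injective.ne (by decide))
  rw [sum_votes]
  have key' := (Nat.cast_le (α := ℝ)).2 key
  push_cast at key'
  linarith

theorem sum_wk_v2_le : ∑ i : Fin 11, wk w2 v2 (votes i) ≤ 16 := by
  have word {σ : Perm (Fin 5)} (L : List (Fin 5)) (hL : ∀ i ∈ L, (i : ℕ) + 1 < 5)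
      (h : σ * (L.map adjSwap).prod = v2) : wk w2 v2 σ ≤ wordCost w2 L :=
    wk_le_wordCost w2_nonneg hL h
  have h1 := word (σ := v1) [0, 1, 2, 3] (by decide) (by decide)
  have h2 := word (σ := v2) [] (by decide) (by simp)
  have h3 := word (σ := v3) [0] (by decide) (by decide)
  have h4 := word (σ := v4) [2, 0, 1] (by decide) (by decide)
  have h5 := word (σ := v5) [0, 1, 2] (by decide) (by decide)
  norm_num [wordCost, w2] at h1 h2 h3 h4 h5
  rw [sum_votes]
  linarith

end WeightedKendall

open WeightedKendall in
/-- with weights `[1,1,0,0]`, the ranking `[2,3,4,5,1]` achieves cumulative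
weighted Kendall distance `16` from the 11 votes, and no permutation does better. -/
theorem stmt_17 :
    (∑ i : Fin 11, wk w2 v2 (votes i) = 16) ∧
    (∀ π : Equiv.Perm (Fin 5), 16 ≤ ∑ i : Fin 11, wk w2 π (votes i)) :=
  ⟨le_antisymm sum_wk_v2_le (sixteen_le_sum_wk v2), sixteen_le_sum_wk⟩
end
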